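/- arXiv:2508.17574 — 3 statements merged into one kernel-verified Lean document; each statement's English description precedes it below -/
import Mathlib

section
/- Let k be an algebraically closed field of characteristic 0. The following four subsets of G₂ are pairwise distinct subgroups of G₂, each contained in U₂ = {[[1,b,c],[0,1,2b],[0,0,1]] : b,c ∈ k} and each normal in G₂ (invariant under conjugation by every element of G₂): (1) the trivial subgroup; (2) {[[1,0,t],[0,1,0],[0,0,1]] : t ∈ k}; (3) {[[1,t,t²],[0,1,2t],[0,0,1]] : t ∈ k}; (4) U₂ itself. -/
open scoped MatrixGroups

namespace FourInvAux

variable {k : Type*} [Field k]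

lemma one_eq3 : (1 : Matrix (Fin 3) (Fin 3) k) = !![1,0,0;0,1,0;0,0,1] := by
  ext i j; fin_cases i <;> fin_cases j <;> simp [Matrix.one_apply, Matrix.vecHead, Matrix.vecTail]

lemma conj_val (g h : GL (Fin 3) k) (X : Matrix (Fin 3) (Fin 3) k)
    (hX : X * (g : Matrix (Fin 3) (Fin 3) k)
        = (g : Matrix (Fin 3) (Fin 3) k) * (h : Matrix (Fin 3) (Fin 3) k)) :
    ((g * h * g⁻¹ : GL (Fin 3) k) : Matrix (Fin 3) (Fin 3) k) = X := by
  have h1 : ((g * h * g⁻¹ : GL (Fin 3) k) : Matrix (Fin 3) (Fin 3) k)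
      = (g : Matrix (Fin 3) (Fin 3) k) * (h : Matrix (Fin 3) (Fin 3) k)
        * ((g⁻¹ : GL (Fin 3) k) : Matrix (Fin 3) (Fin 3) k) := by
    simp [Units.val_mul]
  have h2 : ((g : Matrix (Fin 3) (Fin 3) k))
      * ((g⁻¹ : GL (Fin 3) k) : Matrix (Fin 3) (Fin 3) k) = 1 := by
    rw [← Units.val_mul, mul_inv_cancel, Units.val_one]
  rw [h1, ← hX, mul_assoc, h2, mul_one]

/-- The subgroup `{[[1,0,t],[0,1,0],[0,0,1]]}`. -/
def H2 (k : Type*) [Field k] : Subgroup (GL (Fin 3) k) where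
  carrier := {M | ∃ t : k, (M : Matrix (Fin 3) (Fin 3) k) = !![1,0,t;0,1,0;0,0,1]}
  one_mem' := ⟨0, by rw [Units.val_one, one_eq3]⟩
  mul_mem' := by
    rintro M N ⟨s, hs⟩ ⟨t, ht⟩
    refine ⟨s + t, ?_⟩
    rw [Units.val_mul, hs, ht]
    ext i j; fin_cases i <;> fin_cases j <;>
      simp [Matrix.mul_apply, Fin.sum_univ_succ, Matrix.vecHead, Matrix.vecTail] <;> ring
  inv_mem' := by
    rintro M ⟨t, ht⟩
    refine ⟨-t, ?_⟩
    rw [Matrix.coe_units_inv, ht, Matrix.inv_eq_right_inv]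
    ext i j; fin_cases i <;> fin_cases j <;>
      simp [Matrix.mul_apply, Fin.sum_univ_succ, Matrix.vecHead, Matrix.vecTail, Matrix.one_apply] <;> ring

/-- The subgroup `{[[1,t,t²],[0,1,2t],[0,0,1]]}`. -/
def H3 (k : Type*) [Field k] : Subgroup (GL (Fin 3) k) where
  carrier := {M | ∃ t : k, (M : Matrix (Fin 3) (Fin 3) k) = !![1,t,t^2;0,1,2*t;0,0,1]}
  one_mem' := ⟨0, by rw [Units.val_one, one_eq3]; norm_num⟩
  mul_mem' := by
    rintro M N ⟨s, hs⟩ ⟨t, ht⟩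
    refine ⟨s + t, ?_⟩
    rw [Units.val_mul, hs, ht]
    ext i j; fin_cases i <;> fin_cases j <;>
      simp [Matrix.mul_apply, Fin.sum_univ_succ, Matrix.vecHead, Matrix.vecTail] <;> ring
  inv_mem' := by
    rintro M ⟨t, ht⟩
    refine ⟨-t, ?_⟩
    rw [Matrix.coe_units_inv, ht, Matrix.inv_eq_right_inv]
    ext i j; fin_cases i <;> fin_cases j <;>
      simp [Matrix.mul_apply, Fin.sum_univ_succ, Matrix.vecHead, Matrix.vecTail, Matrix.one_apply] <;> ring

/-- A generic unipotent element of `U₂` as a unit. -/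
def u (b c : k) : GL (Fin 3) k :=
  ⟨!![1,b,c;0,1,2*b;0,0,1], !![1,-b,2*b^2-c;0,1,-2*b;0,0,1],
    by ext i j; fin_cases i <;> fin_cases j <;>
      simp [Matrix.mul_apply, Fin.sum_univ_succ, Matrix.vecHead, Matrix.vecTail, Matrix.one_apply] <;> ring,
    by ext i j; fin_cases i <;> fin_cases j <;>
      simp [Matrix.mul_apply, Fin.sum_univ_succ, Matrix.vecHead, Matrix.vecTail, Matrix.one_apply] <;> ring⟩

lemma u_val (b c : k) :
    ((u b c : GL (Fin 3) k) : Matrix (Fin 3) (Fin 3) k) = !![1,b,c;0,1,2*b;0,0,1] := rfl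

end FourInvAux

open FourInvAux

/-- The four subsets of `G₂` given by (1) the trivial subgroup,
(2) `{[[1,0,t],[0,1,0],[0,0,1]] : t ∈ k}`, (3) `{[[1,t,t²],[0,1,2t],[0,0,1]] : t ∈ k}` and
(4) `U₂` itself are pairwise distinct subgroups of `GL(3,k)`, each contained in `U₂` and each
invariant under conjugation by every element of `G₂`. -/
theorem four_invariant_subgroups_in_U2 (k : Type*) [Field k] [IsAlgClosed k] [CharZero k]
    (G₂ U₂ : Subgroup (GL (Fin 3) k))
    (hG₂ : ∀ M : GL (Fin 3) k, M ∈ G₂ ↔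
      ∃ (a : kˣ) (b c : k),
        (M : Matrix (Fin 3) (Fin 3) k) =
          !![(a : k), b, c; 0, (a : k) ^ 2, 2 * (a : k) * b; 0, 0, (a : k) ^ 3])
    (hU₂ : ∀ M : GL (Fin 3) k, M ∈ U₂ ↔
      ∃ b c : k, (M : Matrix (Fin 3) (Fin 3) k) = !![1, b, c; 0, 1, 2 * b; 0, 0, 1]) :
    ∃ H₁ H₂ H₃ H₄ : Subgroup (GL (Fin 3) k),
      (∀ M : GL (Fin 3) k, M ∈ H₁ ↔ M = 1) ∧
      (∀ M : GL (Fin 3) k, M ∈ H₂ ↔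
        ∃ t : k, (M : Matrix (Fin 3) (Fin 3) k) = !![1, 0, t; 0, 1, 0; 0, 0, 1]) ∧
      (∀ M : GL (Fin 3) k, M ∈ H₃ ↔
        ∃ t : k, (M : Matrix (Fin 3) (Fin 3) k) = !![1, t, t ^ 2; 0, 1, 2 * t; 0, 0, 1]) ∧
      H₄ = U₂ ∧
      (H₁ ≠ H₂ ∧ H₁ ≠ H₃ ∧ H₁ ≠ H₄ ∧ H₂ ≠ H₃ ∧ H₂ ≠ H₄ ∧ H₃ ≠ H₄) ∧
      (H₁ ≤ U₂ ∧ H₂ ≤ U₂ ∧ H₃ ≤ U₂ ∧ H₄ ≤ U₂) ∧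
      (∀ g ∈ G₂, ∀ h : GL (Fin 3) k,
        (h ∈ H₁ → g * h * g⁻¹ ∈ H₁) ∧ (h ∈ H₂ → g * h * g⁻¹ ∈ H₂) ∧
        (h ∈ H₃ → g * h * g⁻¹ ∈ H₃) ∧ (h ∈ H₄ → g * h * g⁻¹ ∈ H₄)) := by
  refine ⟨⊥, H2 k, H3 k, U₂, fun M => Subgroup.mem_bot, fun M => Iff.rfl, fun M => Iff.rfl,
    rfl, ?_, ?_, ?_⟩
  -- distinctness
  · have hne : ∀ b c : k, (b, c) ≠ (0, 0) → (u b c : GL (Fin 3) k) ≠ 1 := by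
      intro b c hbc h
      apply hbc
      have h01 := congrArg (fun M : GL (Fin 3) k => (M : Matrix (Fin 3) (Fin 3) k) 0 1) h
      have h02 := congrArg (fun M : GL (Fin 3) k => (M : Matrix (Fin 3) (Fin 3) k) 0 2) h
      simp [u_val, Units.val_one, Matrix.one_apply] at h01 h02
      simp [h01, h02]
    have m2 : (u 0 1 : GL (Fin 3) k) ∈ H2 k := by
      refine ⟨1, ?_⟩
      rw [u_val]; norm_num
    have m3 : (u 1 1 : GL (Fin 3) k) ∈ H3 k := by
      refine ⟨1, ?_⟩
      rw [u_val]; norm_num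
    have m4 : ∀ b c : k, (u b c : GL (Fin 3) k) ∈ U₂ := by
      intro b c; rw [hU₂]; exact ⟨b, c, u_val b c⟩
    refine ⟨?_, ?_, ?_, ?_, ?_, ?_⟩
    · intro h
      exact hne 0 1 (by simp) (by simpa using (h ▸ m2 : (u 0 1 : GL (Fin 3) k) ∈ (⊥ : Subgroup _)))
    · intro h
      exact hne 1 1 (by simp) (by simpa using (h ▸ m3 : (u 1 1 : GL (Fin 3) k) ∈ (⊥ : Subgroup _)))
    · intro h
      exact hne 0 1 (by simp)
        (by simpa using (h ▸ m4 0 1 : (u 0 1 : GL (Fin 3) k) ∈ (⊥ : Subgroup _)))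
    · intro h
      obtain ⟨t, ht⟩ := (h ▸ m3 : (u 1 1 : GL (Fin 3) k) ∈ H2 k)
      have := congrArg (fun M : Matrix (Fin 3) (Fin 3) k => M 0 1) ht
      simp [u_val] at this
    · intro h
      obtain ⟨t, ht⟩ := (h ▸ m4 1 0 : (u 1 0 : GL (Fin 3) k) ∈ H2 k)
      have := congrArg (fun M : Matrix (Fin 3) (Fin 3) k => M 0 1) ht
      simp [u_val] at this
    · intro h
      obtain ⟨t, ht⟩ := (h ▸ m4 0 1 : (u 0 1 : GL (Fin 3) k) ∈ H3 k)
      have h01 := congrArg (fun M : Matrix (Fin 3) (Fin 3) k => M 0 1) ht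
      have h02 := congrArg (fun M : Matrix (Fin 3) (Fin 3) k => M 0 2) ht
      simp [u_val] at h01 h02
      rw [← h01] at h02
      simp at h02
  -- containments
  · refine ⟨bot_le, ?_, ?_, le_rfl⟩
    · rintro M ⟨t, ht⟩
      rw [hU₂]
      refine ⟨0, t, ?_⟩
      rw [ht]; norm_num
    · rintro M ⟨t, ht⟩
      rw [hU₂]
      exact ⟨t, t ^ 2, ht⟩
  -- normality
  · intro g hg h
    obtain ⟨a, b, c, hA⟩ := (hG₂ g).mp hg
    have ha : (a : k) ≠ 0 := a.ne_zero
    refine ⟨?_, ?_, ?_, ?_⟩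
    · intro h1
      rw [Subgroup.mem_bot] at h1 ⊢
      rw [h1]; group
    · rintro ⟨t, ht⟩
      refine ⟨t / (a : k) ^ 2, conj_val g h _ ?_⟩
      rw [hA, ht]
      ext i j; fin_cases i <;> fin_cases j <;>
        simp [Matrix.mul_apply, Fin.sum_univ_succ, Matrix.vecHead, Matrix.vecTail] <;> field_simp <;> ring
    · rintro ⟨t, ht⟩
      refine ⟨t / (a : k), conj_val g h _ ?_⟩
      rw [hA, ht]
      ext i j; fin_cases i <;> fin_cases j <;>
        simp [Matrix.mul_apply, Fin.sum_univ_succ, Matrix.vecHead, Matrix.vecTail] <;> field_simp <;> ring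
    · intro hmem
      obtain ⟨b', c', hB⟩ := (hU₂ h).mp hmem
      rw [hU₂]
      refine ⟨b' / (a : k), c' / (a : k) ^ 2, conj_val g h _ ?_⟩
      rw [hA, hB]
      ext i j; fin_cases i <;> fin_cases j <;>
        simp [Matrix.mul_apply, Fin.sum_univ_succ, Matrix.vecHead, Matrix.vecTail] <;> field_simp <;> ring
end

section
/- Let k be an algebraically closed field of characteristic 0. The group G₁ of all matrices [[a,b],[0,a²]] (a ∈ kˣ, b ∈ k) and the group G₂ of all matrices [[a,b,c],[0,a²,2ab],[0,0,a³]] (a ∈ kˣ, b,c ∈ k) are not isomorphic as groups. -/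
/-!
An involution `[[a, b], [0, a²]]` of `G₁` has `a = -1`, and its centralizer, the matrices
`[[a', b'], [0, a'²]]` with `2b' = b(a'² - a')`, is abelian (a conjugate of the diagonal torus).
In `G₂` the involution `diag(-1, 1, -1)` commutes with the
torus `diag(t, t², t³)` and with the centre `{a = 1, b = 0}`, on which the torus acts by
`c ↦ t² c`; so its centralizer is not abelian.
-/

open scoped MatrixGroups

section
variable {R : Type*} [CommRing R]

def mat₁ (a b : R) : Matrix (Fin 2) (Fin 2) R := !![a, b; 0, a ^ 2]

def mat₂ (a b c : R) : Matrix (Fin 3) (Fin 3) R := !![a, b, c; 0, a ^ 2, 2 * a * b; 0, 0, a ^ 3]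

theorem mat₁_mul (a b a' b' : R) :
    mat₁ a b * mat₁ a' b' = mat₁ (a * a') (a * b' + b * a' ^ 2) := by
  simp only [mat₁, Matrix.mul_fin_two]
  ring_nf

theorem mat₂_mul (a b c a' b' c' : R) :
    mat₂ a b c * mat₂ a' b' c' =
      mat₂ (a * a') (a * b' + b * a' ^ 2) (a * c' + 2 * a' * b * b' + c * a' ^ 3) := by
  simp only [mat₂, Matrix.mul_fin_three]
  ring_nf

theorem mat₁_one : mat₁ (1 : R) 0 = 1 := by
  simp [mat₁, Matrix.one_fin_two]

theorem mat₂_one : mat₂ (1 : R) 0 0 = 1 := by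
  simp [mat₂, Matrix.one_fin_three]

theorem mat₁_inj {a b a' b' : R} : mat₁ a b = mat₁ a' b' ↔ a = a' ∧ b = b' := by
  refine ⟨fun h => ⟨by simpa [mat₁] using congrFun₂ h 0 0, by simpa [mat₁] using congrFun₂ h 0 1⟩,
    ?_⟩
  rintro ⟨rfl, rfl⟩; rfl

theorem mat₂_inj {a b c a' b' c' : R} :
    mat₂ a b c = mat₂ a' b' c' ↔ a = a' ∧ b = b' ∧ c = c' := by
  refine ⟨fun h => ⟨by simpa [mat₂] using congrFun₂ h 0 0, by simpa [mat₂] using congrFun₂ h 0 1,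
    by simpa [mat₂] using congrFun₂ h 0 2⟩, ?_⟩
  rintro ⟨rfl, rfl, rfl⟩; rfl

theorem det_mat₂ (a b c : R) : (mat₂ a b c).det = a ^ 6 := by
  rw [mat₂, Matrix.det_fin_three]
  simp only [Matrix.of_apply, Matrix.cons_val', Matrix.cons_val_zero, Matrix.cons_val_fin_one,
    Matrix.cons_val_one, Matrix.cons_val, mul_zero, sub_zero, zero_mul, add_zero]
  ring

theorem commute_mat₁_iff {a b c u : R} :
    Commute (mat₁ a b) (mat₁ c u) ↔ a * u + b * c ^ 2 = c * b + u * a ^ 2 := by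
  rw [Commute, SemiconjBy, mat₁_mul, mat₁_mul, mat₁_inj, mul_comm c a]
  simp

theorem commute_mat₂_iff {a b c a' b' c' : R} :
    Commute (mat₂ a b c) (mat₂ a' b' c') ↔
      a * b' + b * a' ^ 2 = a' * b + b' * a ^ 2 ∧
        a * c' + 2 * a' * b * b' + c * a' ^ 3 = a' * c + 2 * a * b' * b + c' * a ^ 3 := by
  rw [Commute, SemiconjBy, mat₂_mul, mat₂_mul, mat₂_inj, mul_comm a' a]
  simp

variable [IsDomain R]

theorem eq_neg_one_of_mat₁_mul_self_eq_one (h2 : (2 : R) ≠ 0) {a b : R} (hne : mat₁ a b ≠ 1)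
    (h : mat₁ a b * mat₁ a b = 1) : a = -1 := by
  rw [mat₁_mul, ← mat₁_one, mat₁_inj] at h
  obtain ⟨ha, hb⟩ := h
  rcases mul_self_eq_one_iff.1 ha with rfl | rfl
  · have hb : b = 0 := (mul_eq_zero.1 (by linear_combination hb : 2 * b = 0)).resolve_left h2
    exact absurd (by rw [hb, mat₁_one]) hne
  · rfl

theorem commute_of_commute_mat₁_neg_one (h2 : (2 : R) ≠ 0) {b c₁ u₁ c₂ u₂ : R}
    (h₁ : Commute (mat₁ (-1) b) (mat₁ c₁ u₁)) (h₂ : Commute (mat₁ (-1) b) (mat₁ c₂ u₂)) :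
    Commute (mat₁ c₁ u₁) (mat₁ c₂ u₂) := by
  rw [commute_mat₁_iff] at h₁ h₂ ⊢
  apply mul_left_cancel₀ h2
  linear_combination (c₂ - c₂ ^ 2) * h₁ + (c₁ ^ 2 - c₁) * h₂

end

def InvolutionCentralizersCommute (G : Type*) [Monoid G] : Prop :=
  ∀ x y z : G, x ≠ 1 → x * x = 1 → Commute x y → Commute x z → Commute y z

theorem InvolutionCentralizersCommute.of_mulEquiv {G H : Type*} [Monoid G] [Monoid H]
    (e : G ≃* H) (h : InvolutionCentralizersCommute H) : InvolutionCentralizersCommute G :=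
  fun x y z hx hxx hxy hxz =>
    (commute_map_iff e.injective).1 <|
      h (e x) (e y) (e z) (by rwa [ne_eq, e.map_eq_one_iff]) (by rw [← map_mul, hxx, map_one])
        (hxy.map e) (hxz.map e)

section
variable {n R : Type*} [Fintype n] [DecidableEq n] [CommRing R]

def Subgroup.toMatrix (S : Subgroup (GL n R)) : S →* Matrix n n R :=
  (Units.coeHom _).comp S.subtype

theorem Subgroup.toMatrix_injective (S : Subgroup (GL n R)) : Function.Injective S.toMatrix :=
  Units.val_injective.comp Subtype.val_injective

end

theorem involutionCentralizersCommute_of_forall_mem {R : Type*} [CommRing R] [IsDomain R]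
    (h2 : (2 : R) ≠ 0) (S : Subgroup (GL (Fin 2) R))
    (hS : ∀ M ∈ S, ∃ a b : R, (M : Matrix (Fin 2) (Fin 2) R) = mat₁ a b) :
    InvolutionCentralizersCommute S := by
  intro x y z hx hxx hxy hxz
  obtain ⟨a, b, hxm⟩ : ∃ a b : R, S.toMatrix x = mat₁ a b := hS x x.2
  obtain ⟨c₁, u₁, hym⟩ : ∃ a b : R, S.toMatrix y = mat₁ a b := hS y y.2
  obtain ⟨c₂, u₂, hzm⟩ : ∃ a b : R, S.toMatrix z = mat₁ a b := hS z z.2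
  simp only [← commute_map_iff S.toMatrix_injective, hxm, hym, hzm] at hxy hxz ⊢
  have ha : a = -1 := by
    refine eq_neg_one_of_mat₁_mul_self_eq_one h2 (b := b) ?_ ?_
    · rwa [← hxm, ne_eq, map_eq_one_iff _ S.toMatrix_injective]
    · rw [← hxm, ← map_mul, hxx, map_one]
  subst ha
  exact commute_of_commute_mat₁_neg_one h2 hxy hxz

theorem not_involutionCentralizersCommute_of_forall_mem {k : Type*} [Field k] (h2 : (2 : k) ≠ 0)
    {t : kˣ} (ht : (t : k) ^ 2 ≠ 1) (S : Subgroup (GL (Fin 3) k))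
    (hS : ∀ M : GL (Fin 3) k,
      (∃ (a : kˣ) (b c : k), (M : Matrix (Fin 3) (Fin 3) k) = mat₂ (a : k) b c) → M ∈ S) :
    ¬ InvolutionCentralizersCommute S := by
  have hmem (a : kˣ) (b c : k) : ∃ x : S, S.toMatrix x = mat₂ (a : k) b c :=
    ⟨⟨.mkOfDetNeZero (mat₂ (a : k) b c) (by rw [det_mat₂]; exact pow_ne_zero 6 a.ne_zero),
      hS _ ⟨a, b, c, rfl⟩⟩, rfl⟩
  obtain ⟨x, hx⟩ := hmem (-1) 0 0
  obtain ⟨y, hy⟩ := hmem t 0 0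
  obtain ⟨z, hz⟩ := hmem 1 0 1
  intro h
  have hyz := h x y z ?_ ?_ ?_ ?_
  · rw [← commute_map_iff S.toMatrix_injective, hy, hz, commute_mat₂_iff] at hyz
    norm_num at hyz
    exact ht (mul_left_cancel₀ t.ne_zero (by linear_combination -hyz))
  · rw [ne_eq, ← map_eq_one_iff _ S.toMatrix_injective, hx, ← mat₂_one, mat₂_inj]
    simp only [Units.val_neg, Units.val_one, and_true]
    exact fun h => h2 (by linear_combination -h)
  · rw [← map_eq_one_iff _ S.toMatrix_injective, map_mul, hx, mat₂_mul, ← mat₂_one]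
    norm_num
  · rw [← commute_map_iff S.toMatrix_injective, hx, hy, commute_mat₂_iff]
    norm_num
  · rw [← commute_map_iff S.toMatrix_injective, hx, hz, commute_mat₂_iff]
    norm_num

theorem G1_not_isomorphic_G2_general (k : Type*) [Field k] [CharZero k]
    (G₁ : Subgroup (GL (Fin 2) k)) (G₂ : Subgroup (GL (Fin 3) k))
    (hG₁ : ∀ M : GL (Fin 2) k, M ∈ G₁ ↔
      ∃ (a : kˣ) (b : k),
        (M : Matrix (Fin 2) (Fin 2) k) = !![(a : k), b; 0, (a : k) ^ 2])
    (hG₂ : ∀ M : GL (Fin 3) k, M ∈ G₂ ↔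
      ∃ (a : kˣ) (b c : k),
        (M : Matrix (Fin 3) (Fin 3) k) =
          !![(a : k), b, c; 0, (a : k) ^ 2, 2 * (a : k) * b; 0, 0, (a : k) ^ 3]) :
    ¬ Nonempty (G₁ ≃* G₂) := by
  rintro ⟨e⟩
  have h2 : (2 : k) ≠ 0 := two_ne_zero
  have hG₁' : ∀ M ∈ G₁, ∃ a b : k, (M : Matrix (Fin 2) (Fin 2) k) = mat₁ a b := fun M hM =>
    let ⟨a, b, h⟩ := (hG₁ M).1 hM
    ⟨a, b, h⟩
  refine not_involutionCentralizersCommute_of_forall_mem h2 (t := .mk0 2 h2) (by norm_num) G₂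
    (fun M hM => (hG₂ M).2 hM) ?_
  exact (involutionCentralizersCommute_of_forall_mem h2 G₁ hG₁').of_mulEquiv e.symm

/-- The group `G₁` of matrices `[[a,b],[0,a²]]` (`a ∈ kˣ`, `b ∈ k`) and the
group `G₂` of matrices `[[a,b,c],[0,a²,2ab],[0,0,a³]]` (`a ∈ kˣ`, `b,c ∈ k`) are not
isomorphic as groups. -/
theorem G1_not_isomorphic_G2 (k : Type*) [Field k] [IsAlgClosed k] [CharZero k]
    (G₁ : Subgroup (GL (Fin 2) k)) (G₂ : Subgroup (GL (Fin 3) k))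
    (hG₁ : ∀ M : GL (Fin 2) k, M ∈ G₁ ↔
      ∃ (a : kˣ) (b : k),
        (M : Matrix (Fin 2) (Fin 2) k) = !![(a : k), b; 0, (a : k) ^ 2])
    (hG₂ : ∀ M : GL (Fin 3) k, M ∈ G₂ ↔
      ∃ (a : kˣ) (b c : k),
        (M : Matrix (Fin 3) (Fin 3) k) =
          !![(a : k), b, c; 0, (a : k) ^ 2, 2 * (a : k) * b; 0, 0, (a : k) ^ 3]) :
    ¬ Nonempty (G₁ ≃* G₂) :=
  G1_not_isomorphic_G2_general k G₁ G₂ hG₁ hG₂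
end

section
/- Let k be an algebraically closed field of characteristic 0. The groups ℤ × G₁ and ℤ × G₂ are not isomorphic, where G₁ is the group of all matrices [[a,b],[0,a²]] (a ∈ kˣ, b ∈ k) and G₂ is the group of all matrices [[a,b,c],[0,a²,2ab],[0,0,a³]] (a ∈ kˣ, b,c ∈ k). (These two direct products are respectively isomorphic to the derived Picard groups of the DG free algebras 𝒜₁ and 𝒜₂ of the paper.) -/
open scoped MatrixGroups

private theorem ZG1_aux (k : Type*) [Field k] [CharZero k]
    (G₁ : Subgroup (GL (Fin 2) k))
    (hG₁ : ∀ M : GL (Fin 2) k, M ∈ G₁ ↔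
      ∃ (a : kˣ) (b : k),
        (M : Matrix (Fin 2) (Fin 2) k) = !![(a : k), b; 0, (a : k) ^ 2])
    (g x y : Multiplicative ℤ × G₁) (hg2 : g ^ 2 = 1) (hg1 : g ≠ 1)
    (hgx : g * x = x * g) (hgy : g * y = y * g) : x * y = y * x := by
  obtain ⟨gz, gm⟩ := g
  obtain ⟨xz, xm⟩ := x
  obtain ⟨yz, ym⟩ := y
  have hz : gz = 1 := by
    have h1 : gz ^ 2 = 1 := congrArg Prod.fst hg2
    have h2 : Multiplicative.toAdd gz + Multiplicative.toAdd gz = 0 := by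
      have := congrArg Multiplicative.toAdd h1
      simpa [pow_two] using this
    have h3 : Multiplicative.toAdd gz = 0 := by omega
    simpa using congrArg Multiplicative.ofAdd h3
  have hgm2 : gm ^ 2 = 1 := congrArg Prod.snd hg2
  have hgmne : gm ≠ 1 := by
    intro h; exact hg1 (by simp [hz, h, Prod.ext_iff])
  obtain ⟨a, b, hab⟩ := (hG₁ gm.1).mp gm.2
  obtain ⟨a₁, b₁, h1ab⟩ := (hG₁ xm.1).mp xm.2
  obtain ⟨a₂, b₂, h2ab⟩ := (hG₁ ym.1).mp ym.2
  have hM2 : ((gm : GL (Fin 2) k) : Matrix (Fin 2) (Fin 2) k)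
      * ((gm : GL (Fin 2) k) : Matrix (Fin 2) (Fin 2) k) = 1 := by
    have h : (gm : GL (Fin 2) k) * gm = 1 := by
      have := congrArg (Subtype.val) hgm2
      simpa [pow_two] using this
    have := congrArg (Units.val) h
    simpa using this
  rw [hab, Matrix.mul_fin_two, Matrix.one_fin_two] at hM2
  have e00 : (a:k) * a = 1 := by simpa using congrFun (congrFun hM2 0) 0
  have e01 : (a:k) * b + b * (a:k)^2 = 0 := by simpa using congrFun (congrFun hM2 0) 1
  have ha : (a : k) = -1 := by
    rcases mul_self_eq_one_iff.mp e00 with h | h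
    · exfalso
      have h2b : (2:k) * b = 0 := by linear_combination e01 - b * ((a:k) + 2) * h
      have hb : b = 0 := (mul_eq_zero.mp h2b).resolve_left two_ne_zero
      apply hgmne
      have hone : ((gm : GL (Fin 2) k) : Matrix (Fin 2) (Fin 2) k) = 1 := by
        rw [hab, hb, h, Matrix.one_fin_two]; norm_num
      exact Subtype.ext (Units.ext hone)
    · exact h
  have key : ∀ (m : G₁) (a' : kˣ) (b' : k),
      ((m : GL (Fin 2) k) : Matrix (Fin 2) (Fin 2) k) = !![(a':k), b'; 0, (a':k)^2] →
      (gm : GL (Fin 2) k) * m = (m : GL (Fin 2) k) * gm →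
      (2:k) * b' = b * ((a':k)^2 - (a':k)) := by
    intro m a' b' hm hcomm
    have hc := congrArg (Units.val) hcomm
    rw [Units.val_mul, Units.val_mul, hab, hm, Matrix.mul_fin_two, Matrix.mul_fin_two] at hc
    have e := congrFun (congrFun hc 0) 1
    simp at e
    rw [ha] at e
    linear_combination (-1 : k) * e
  have hcx : (gm : GL (Fin 2) k) * xm = (xm : GL (Fin 2) k) * gm :=
    congrArg Subtype.val (congrArg Prod.snd hgx)
  have hcy : (gm : GL (Fin 2) k) * ym = (ym : GL (Fin 2) k) * gm :=
    congrArg Subtype.val (congrArg Prod.snd hgy)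
  have k1 := key xm a₁ b₁ h1ab hcx
  have k2 := key ym a₂ b₂ h2ab hcy
  have hbb : (a₁:k) * b₂ + b₁ * (a₂:k)^2 = (a₂:k) * b₁ + b₂ * (a₁:k)^2 := by
    linear_combination (((a₂:k)^2-(a₂:k))/2) * k1 + (((a₁:k)-(a₁:k)^2)/2) * k2
  have hmm : ((xm : GL (Fin 2) k) : Matrix (Fin 2) (Fin 2) k)
      * ((ym : GL (Fin 2) k) : Matrix (Fin 2) (Fin 2) k)
      = ((ym : GL (Fin 2) k) : Matrix (Fin 2) (Fin 2) k)
      * ((xm : GL (Fin 2) k) : Matrix (Fin 2) (Fin 2) k) := by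
    rw [h1ab, h2ab, Matrix.mul_fin_two, Matrix.mul_fin_two]
    ext i j
    fin_cases i <;> fin_cases j <;> simp
    all_goals (try linear_combination hbb)
    all_goals ring
  have hxy : xm * ym = ym * xm := Subtype.ext (Units.ext hmm)
  show (xz * yz, xm * ym) = (yz * xz, ym * xm)
  rw [mul_comm xz yz, hxy]

private theorem ZG2_aux (k : Type*) [Field k] [CharZero k]
    (G₂ : Subgroup (GL (Fin 3) k))
    (hG₂ : ∀ M : GL (Fin 3) k, M ∈ G₂ ↔
      ∃ (a : kˣ) (b c : k),
        (M : Matrix (Fin 3) (Fin 3) k) =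
          !![(a : k), b, c; 0, (a : k) ^ 2, 2 * (a : k) * b; 0, 0, (a : k) ^ 3]) :
    ∃ g x y : Multiplicative ℤ × G₂,
      g ^ 2 = 1 ∧ g ≠ 1 ∧ g * x = x * g ∧ g * y = y * g ∧ x * y ≠ y * x := by
  set M : GL (Fin 3) k :=
    ⟨!![-1,0,0;0,1,0;0,0,-1], !![-1,0,0;0,1,0;0,0,-1],
      by rw [Matrix.mul_fin_three, Matrix.one_fin_three]; norm_num,
      by rw [Matrix.mul_fin_three, Matrix.one_fin_three]; norm_num⟩ with hM
  set X : GL (Fin 3) k :=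
    ⟨!![2,0,0;0,4,0;0,0,8], !![2⁻¹,0,0;0,4⁻¹,0;0,0,8⁻¹],
      by rw [Matrix.mul_fin_three, Matrix.one_fin_three]; norm_num,
      by rw [Matrix.mul_fin_three, Matrix.one_fin_three]; norm_num⟩ with hX
  set Y : GL (Fin 3) k :=
    ⟨!![1,0,1;0,1,0;0,0,1], !![1,0,-1;0,1,0;0,0,1],
      by rw [Matrix.mul_fin_three, Matrix.one_fin_three]; norm_num,
      by rw [Matrix.mul_fin_three, Matrix.one_fin_three]; norm_num⟩ with hY
  have hMmem : M ∈ G₂ := by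
    rw [hG₂]
    exact ⟨-1, 0, 0, by norm_num [hM]⟩
  have hXmem : X ∈ G₂ := by
    rw [hG₂]
    refine ⟨Units.mk0 (2:k) two_ne_zero, 0, 0, ?_⟩
    norm_num [hX]
  have hYmem : Y ∈ G₂ := by
    rw [hG₂]
    exact ⟨1, 0, 1, by norm_num [hY]⟩
  refine ⟨(1, ⟨M, hMmem⟩), (1, ⟨X, hXmem⟩), (1, ⟨Y, hYmem⟩), ?_, ?_, ?_, ?_, ?_⟩
  · have hMM : (M : Matrix (Fin 3) (Fin 3) k) * M = 1 := by
      rw [hM]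
      show !![-1,0,0;0,1,0;0,0,-1] * !![-1,0,0;0,1,0;0,0,-1] = (1 : Matrix (Fin 3) (Fin 3) k)
      rw [Matrix.mul_fin_three, Matrix.one_fin_three]; norm_num
    have hMM2 : M * M = 1 := Units.ext hMM
    rw [Prod.pow_mk, one_pow, pow_two]
    refine Prod.ext rfl ?_
    exact Subtype.ext (by simpa using hMM2)
  · intro h
    have h2 : (⟨M, hMmem⟩ : G₂) = 1 := congrArg Prod.snd h
    have h3 : (M : Matrix (Fin 3) (Fin 3) k) = 1 := congrArg Units.val (congrArg Subtype.val h2)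
    have := congrFun (congrFun h3 0) 0
    rw [hM] at this
    simp [Matrix.one_fin_three] at this
    exact two_ne_zero (α := k) (by linear_combination -this)
  · have hMX : (M : Matrix (Fin 3) (Fin 3) k) * X = (X : Matrix (Fin 3) (Fin 3) k) * M := by
      rw [hM, hX]
      show !![(-1:k),0,0;0,1,0;0,0,-1] * !![2,0,0;0,4,0;0,0,8]
         = !![(2:k),0,0;0,4,0;0,0,8] * !![-1,0,0;0,1,0;0,0,-1]
      rw [Matrix.mul_fin_three, Matrix.mul_fin_three]; norm_num
    have hMX2 : M * X = X * M := Units.ext hMX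
    rw [Prod.mk_mul_mk, Prod.mk_mul_mk]
    exact Prod.ext rfl (Subtype.ext (by simpa using hMX2))
  · have hMY : (M : Matrix (Fin 3) (Fin 3) k) * Y = (Y : Matrix (Fin 3) (Fin 3) k) * M := by
      rw [hM, hY]
      show !![(-1:k),0,0;0,1,0;0,0,-1] * !![1,0,1;0,1,0;0,0,1]
         = !![(1:k),0,1;0,1,0;0,0,1] * !![-1,0,0;0,1,0;0,0,-1]
      rw [Matrix.mul_fin_three, Matrix.mul_fin_three]; norm_num
    have hMY2 : M * Y = Y * M := Units.ext hMY
    rw [Prod.mk_mul_mk, Prod.mk_mul_mk]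
    exact Prod.ext rfl (Subtype.ext (by simpa using hMY2))
  · intro h
    have h2 : (⟨X, hXmem⟩ : G₂) * ⟨Y, hYmem⟩ = (⟨Y, hYmem⟩ : G₂) * ⟨X, hXmem⟩ :=
      congrArg Prod.snd h
    have h3 : (X : Matrix (Fin 3) (Fin 3) k) * Y = (Y : Matrix (Fin 3) (Fin 3) k) * X :=
      congrArg Units.val (congrArg Subtype.val h2)
    rw [hX, hY] at h3
    have h4 := congrFun (congrFun h3 0) 2
    simp [Matrix.mul_fin_three] at h4

/-- The groups `ℤ × G₁` and `ℤ × G₂` (direct products of the additive group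
of integers with `G₁`, resp. `G₂`) are not isomorphic, where `G₁` is the group of matrices
`[[a,b],[0,a²]]` and `G₂` the group of matrices `[[a,b,c],[0,a²,2ab],[0,0,a³]]`.  (These
direct products are respectively isomorphic to the derived Picard groups of the DG free
algebras `𝒜₁` and `𝒜₂`.) -/
theorem Z_prod_G1_not_isomorphic_Z_prod_G2 (k : Type*) [Field k] [IsAlgClosed k] [CharZero k]
    (G₁ : Subgroup (GL (Fin 2) k)) (G₂ : Subgroup (GL (Fin 3) k))
    (hG₁ : ∀ M : GL (Fin 2) k, M ∈ G₁ ↔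
      ∃ (a : kˣ) (b : k),
        (M : Matrix (Fin 2) (Fin 2) k) = !![(a : k), b; 0, (a : k) ^ 2])
    (hG₂ : ∀ M : GL (Fin 3) k, M ∈ G₂ ↔
      ∃ (a : kˣ) (b c : k),
        (M : Matrix (Fin 3) (Fin 3) k) =
          !![(a : k), b, c; 0, (a : k) ^ 2, 2 * (a : k) * b; 0, 0, (a : k) ^ 3]) :
    ¬ Nonempty ((Multiplicative ℤ × G₁) ≃* (Multiplicative ℤ × G₂)) := by
  rintro ⟨φ⟩
  obtain ⟨g, x, y, hg2, hg1, hgx, hgy, hxy⟩ := ZG2_aux k G₂ hG₂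
  have h := ZG1_aux k G₁ hG₁ (φ.symm g) (φ.symm x) (φ.symm y)
    (by rw [← map_pow, hg2, map_one])
    (fun h => hg1 (φ.symm.injective (by rw [map_one]; exact h)))
    (by rw [← map_mul, ← map_mul, hgx])
    (by rw [← map_mul, ← map_mul, hgy])
  apply hxy
  have h2 := congrArg φ h
  simpa using h2
end
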